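/- Define the sequence of polynomials h_n for n ≥ 10 by h_10 = λ^{10} − 9λ^8 + 26λ^6 − 30λ^4 + 13λ^2 − 1, h_11 = λ^{11} − 10λ^9 + 34λ^7 − 48λ^5 + 29λ^3 − 6λ, and h_n = λ·h_{n−1} − h_{n−2} for n ≥ 12. Then λ² − 1 divides h_n for every n ≥ 10. -/
import Mathlib

open Polynomial

/-- Auxiliary sequence: `hAux m` is the characteristic polynomial of `H (m + 10)`. -/
noncomputable def hAux : ℕ → Polynomial ℤ
  | 0 => X ^ 10 - 9 * X ^ 8 + 26 * X ^ 6 - 30 * X ^ 4 + 13 * X ^ 2 - 1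
  | 1 => X ^ 11 - 10 * X ^ 9 + 34 * X ^ 7 - 48 * X ^ 5 + 29 * X ^ 3 - 6 * X
  | (m + 2) => X * hAux (m + 1) - hAux m

/-- `hPoly n`, for `n ≥ 10`, is the characteristic polynomial of the H-shape tree
`H_n = P_{2,2;n-4}^{2,n-7}`. -/
noncomputable def hPoly (n : ℕ) : Polynomial ℤ := hAux (n - 10)

lemma dvd_hAux (m : ℕ) : (X ^ 2 - 1 : Polynomial ℤ) ∣ hAux m := by
  have key : ∀ m, (X ^ 2 - 1 : Polynomial ℤ) ∣ hAux m ∧ (X ^ 2 - 1) ∣ hAux (m + 1) := by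
    intro m
    induction m with
    | zero =>
      constructor
      · exact ⟨X ^ 8 - 8 * X ^ 6 + 18 * X ^ 4 - 12 * X ^ 2 + 1, by simp [hAux]; ring⟩
      · exact ⟨X * (X ^ 8 - 9 * X ^ 6 + 25 * X ^ 4 - 23 * X ^ 2 + 6), by simp [hAux]; ring⟩
    | succ k ih =>
      refine ⟨ih.2, ?_⟩
      show (X ^ 2 - 1 : Polynomial ℤ) ∣ X * hAux (k + 1) - hAux k
      exact dvd_sub (Dvd.dvd.mul_left ih.2 X) ih.1
  exact (key m).1

theorem X_sq_sub_one_dvd_hPoly (n : ℕ) (hn : 10 ≤ n) :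
    (X ^ 2 - 1) ∣ hPoly n := by
  exact dvd_hAux (n - 10)
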